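/- Let K be a separable complex Hilbert space and let M ⊆ L²(𝕋,H²_K) be a reducing subspace for the bilateral shift U with associated measurable range function J_M (a range function in H²_K). Then M is invariant under Ŝ if and only if J_M(λ) is invariant under the unilateral shift S for a.e. λ ∈ 𝕋. -/

import Mathlib

noncomputable section

open MeasureTheory Complex Submodule
open scoped InnerProductSpace ENNReal ComplexConjugate

set_option synthInstance.maxHeartbeats 1000000
set_option maxHeartbeats 1600000

namespace ShiftPaper

instance : Fact ((0:ℝ) < 1) := ⟨one_pos⟩

/-- The circle, modelled as `ℝ/ℤ`. -/
abbrev 𝕋 : Type := UnitAddCircle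

/-- The normalized Haar (Lebesgue) probability measure on the circle. -/
abbrev μT : Measure 𝕋 := AddCircle.haarAddCircle

/-- The space `L²(𝕋, E)` of square-integrable `E`-valued functions on the circle. -/
abbrev L2 (E : Type*) [NormedAddCommGroup E] := Lp E 2 μT

lemma norm_fourier (n : ℤ) (t : 𝕋) : ‖fourier n t‖ = 1 := by
  rw [fourier_apply, Circle.norm_coe]

section mulF

variable {E : Type*} [NormedAddCommGroup E] [NormedSpace ℂ E]

lemma memLp_mulF (n : ℤ) (f : L2 E) :
    MemLp (fun t => fourier n t • (f : 𝕋 → E) t) 2 μT := by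
  refine MemLp.of_le (Lp.memLp f)
    (((fourier n).continuous.aestronglyMeasurable).smul (Lp.aestronglyMeasurable f)) ?_
  refine Filter.Eventually.of_forall fun t => ?_
  rw [norm_smul, norm_fourier, one_mul]

/-- Multiplication by `fourier n` (i.e. by `λ ↦ λⁿ`) as a bounded operator on `L²(𝕋, E)`.
For `n = 1` this is the bilateral shift `U`; for general `n : ℤ` it is `Uⁿ`. -/
def mulF (n : ℤ) : L2 E →L[ℂ] L2 E :=
  LinearMap.mkContinuous
    { toFun := fun f => (memLp_mulF n f).toLp _
      map_add' := fun f g => by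
        rw [← MemLp.toLp_add (memLp_mulF n f) (memLp_mulF n g)]
        refine MemLp.toLp_congr _ _ ?_
        filter_upwards [Lp.coeFn_add f g] with t ht
        simp only [ht, Pi.add_apply, smul_add]
      map_smul' := fun c f => by
        simp only [RingHom.id_apply]
        rw [← MemLp.toLp_const_smul c (memLp_mulF n f)]
        refine MemLp.toLp_congr _ _ ?_
        filter_upwards [Lp.coeFn_smul c f] with t ht
        rw [ht]
        simp only [Pi.smul_apply]
        rw [smul_comm] }
    1
    (fun f => by
      simp only [LinearMap.coe_mk, AddHom.coe_mk, one_mul]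
      rw [Lp.norm_toLp _ (memLp_mulF n f), Lp.norm_def]
      refine le_of_eq (congrArg ENNReal.toReal ?_)
      refine eLpNorm_congr_norm_ae ?_
      refine Filter.Eventually.of_forall fun t => ?_
      rw [norm_smul, norm_fourier, one_mul])

lemma coeFn_mulF (n : ℤ) (f : L2 E) :
    (mulF n f : 𝕋 → E) =ᵐ[μT] fun t => fourier n t • (f : 𝕋 → E) t :=
  MemLp.coeFn_toLp (memLp_mulF n f)

end mulF

section HardySpace

variable (K : Type) [NormedAddCommGroup K] [InnerProductSpace ℂ K] [CompleteSpace K]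

/-- The continuous function `t ↦ fourier n t • x`. -/
def fourierSmulCM (n : ℤ) (x : K) : C(𝕋, K) :=
  ⟨fun t => fourier n t • x, (fourier n).continuous.smul continuous_const⟩

/-- The element of `L²(𝕋, K)` given by `t ↦ fourier n t • x`. -/
def expVec (n : ℤ) (x : K) : L2 K := ContinuousMap.toLp 2 μT ℂ (fourierSmulCM K n x)

lemma coeFn_expVec (n : ℤ) (x : K) :
    (expVec K n x : 𝕋 → K) =ᵐ[μT] fun t => fourier n t • x :=
  ContinuousMap.coeFn_toLp (𝕜 := ℂ) μT (fourierSmulCM K n x)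

/-- The Hardy space `H²(𝕋, K)`, as the subspace of `L²(𝕋, K)` of functions all of whose
weak Fourier coefficients of negative index vanish (equivalently, all of whose coordinate
functions with respect to an orthonormal basis of `K` lie in the scalar Hardy space `H²`). -/
def Hardy : Submodule ℂ (L2 K) :=
  ⨅ (n : ℤ) (_ : n < 0) (x : K), LinearMap.ker (innerSL ℂ (expVec K n x) : L2 K →ₗ[ℂ] ℂ)

lemma isClosed_Hardy : IsClosed ((Hardy K : Set (L2 K))) := by
  have h : (Hardy K : Set (L2 K)) = ⋂ (n : ℤ) (_ : n < 0) (x : K),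
      (LinearMap.ker (innerSL ℂ (expVec K n x) : L2 K →ₗ[ℂ] ℂ) : Set (L2 K)) := by
    simp only [Hardy, Submodule.coe_iInf]
  rw [h]
  exact isClosed_iInter fun n => isClosed_iInter fun _ => isClosed_iInter fun x =>
    (ContinuousLinearMap.isClosed_ker _)

/-- The Hardy space `H²(𝕋, K)` as a Hilbert space in its own right. -/
abbrev H2 := ↥(Hardy K)

instance : CompleteSpace (H2 K) := (isClosed_Hardy K).completeSpace_coe

end HardySpace


section Shift

variable (K : Type) [NormedAddCommGroup K] [InnerProductSpace ℂ K] [CompleteSpace K]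

lemma inner_expVec_mulF (n : ℤ) (x : K) (f : L2 K) :
    inner ℂ (expVec K n x) (mulF 1 f) = inner ℂ (expVec K (n - 1) x) f := by
  rw [MeasureTheory.L2.inner_def, MeasureTheory.L2.inner_def]
  refine integral_congr_ae ?_
  filter_upwards [coeFn_mulF 1 f, coeFn_expVec K n x, coeFn_expVec K (n-1) x] with t h1 h2 h3
  rw [h1, h2, h3, inner_smul_left, inner_smul_left, inner_smul_right,
    ← fourier_neg, ← fourier_neg, ← mul_assoc, ← fourier_add]
  have h : -n + 1 = -(n - 1) := by ring
  rw [h]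

lemma mulF_mem_hardy {f : L2 K} (hf : f ∈ Hardy K) : mulF 1 f ∈ Hardy K := by
  simp only [Hardy, Submodule.mem_iInf, LinearMap.mem_ker, ContinuousLinearMap.coe_coe, innerSL_apply_apply] at hf ⊢
  intro n hn x
  rw [inner_expVec_mulF]
  exact hf (n - 1) (by omega) x

/-- The unilateral shift `S` on the Hardy space `H²(𝕋, K)`: the restriction of the
bilateral shift (multiplication by the variable) to the Hardy space. -/
def S : H2 K →L[ℂ] H2 K where
  toLinearMap := (mulF (E := K) 1).toLinearMap.restrict
    (p := Hardy K) (q := Hardy K) (fun _ hx => mulF_mem_hardy K hx)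
  cont := by
    apply Continuous.subtype_mk
    exact (mulF (E := K) 1).continuous.comp continuous_subtype_val

/-- The operator `Ŝ` on `L²(𝕋, H²(𝕋,K))`, acting pointwisely (on the values) as the
unilateral shift `S`. -/
def Shat : L2 (H2 K) →L[ℂ] L2 (H2 K) := (S K).compLpL 2 μT

lemma integral_fourier_eq_zero {m : ℤ} (hm : m ≠ 0) :
    ∫ t : 𝕋, fourier m t ∂μT = 0 := by
  have h0 : ((0:ℤ)) ≠ m := fun h => hm h.symm
  have h : inner ℂ (fourierLp (T := 1) 2 (0:ℤ)) (fourierLp 2 m) = 0 :=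
    orthonormal_fourier.2 h0
  rw [MeasureTheory.L2.inner_def] at h
  rw [← h]
  refine integral_congr_ae ?_
  filter_upwards [coeFn_fourierLp 2 (0:ℤ), coeFn_fourierLp 2 m] with t h1 h2
  rw [h1, h2]
  simp [fourier_zero]

lemma const_mem_hardy (x : K) : expVec K 0 x ∈ Hardy K := by
  simp only [Hardy, Submodule.mem_iInf, LinearMap.mem_ker, ContinuousLinearMap.coe_coe, innerSL_apply_apply]
  intro n hn y
  rw [MeasureTheory.L2.inner_def]
  have h : ∀ᵐ t ∂μT, inner ℂ ((expVec K n y : 𝕋 → K) t) ((expVec K 0 x : 𝕋 → K) t)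
      = fourier (-n) t * inner ℂ y x := by
    filter_upwards [coeFn_expVec K n y, coeFn_expVec K 0 x] with t h1 h2
    rw [h1, h2, inner_smul_left, inner_smul_right, ← fourier_neg, fourier_zero, one_mul]
  rw [integral_congr_ae h, integral_mul_const,
    integral_fourier_eq_zero (by omega), zero_mul]

/-- The linear embedding of `K` into `H²(𝕋,K)` as constant functions. -/
def constL : K →ₗ[ℂ] H2 K where
  toFun x := ⟨expVec K 0 x, const_mem_hardy K x⟩
  map_add' x y := by
    apply Subtype.ext
    simp only [Submodule.coe_add]
    unfold expVec
    rw [← map_add]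
    congr 1
    ext t
    simp [fourierSmulCM, smul_add]
  map_smul' c x := by
    apply Subtype.ext
    simp only [RingHom.id_apply, SetLike.val_smul]
    unfold expVec
    rw [← _root_.map_smul]
    congr 1
    ext t
    simp [fourierSmulCM]

end Shift


section RangeFunctions

variable {F : Type*} [NormedAddCommGroup F] [InnerProductSpace ℂ F] [CompleteSpace F]

/-- The orthogonal projection onto a closed subspace, as a plain function (defined to be `0`
if the subspace is not closed). -/
def projTo (N : Submodule ℂ F) (x : F) : F :=
  letI := Classical.dec (IsClosed ((N : Set F)))
  if h : IsClosed ((N : Set F)) then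
    haveI : CompleteSpace N := h.completeSpace_coe
    (orthogonalProjection N x : F)
  else 0

/-- A measurable range function in `F`: a map `J` from `𝕋` to closed subspaces of `F` such
that `t ↦ ⟪P_{J(t)} x, y⟫` is measurable for every `x, y ∈ F`. -/
def IsMeasRange (J : 𝕋 → Submodule ℂ F) : Prop :=
  (∀ t, IsClosed ((J t : Set F))) ∧
  ∀ x y : F, Measurable fun t => inner ℂ (projTo (J t) x) y

/-- The set of `f ∈ L²(𝕋, E)` such that `f(t) ∈ J(t)` for a.e. `t ∈ 𝕋`. -/
def rangeSet {E : Type*} [NormedAddCommGroup E] [NormedSpace ℂ E]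
    (J : 𝕋 → Submodule ℂ E) : Set (L2 E) :=
  {f | ∀ᵐ t ∂μT, (f : 𝕋 → E) t ∈ J t}

end RangeFunctions

section OperatorNotions

variable {E : Type*} [NormedAddCommGroup E] [NormedSpace ℂ E]

/-- A subspace `M` is invariant under the bounded operator `A` if `A(M) ⊆ M`. -/
def InvariantUnder (A : E →L[ℂ] E) (M : Submodule ℂ E) : Prop :=
  ∀ f ∈ M, A f ∈ M

/-- Two bounded operators commute. -/
def CommutesWith (A B : E →L[ℂ] E) : Prop := ∀ f, A (B f) = B (A f)

variable {F : Type*} [NormedAddCommGroup F] [InnerProductSpace ℂ F]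

/-- A subspace `M` is reducing for `A` if both `M` and `M^⊥` are invariant under `A`. -/
def Reducing (A : F →L[ℂ] F) (M : Submodule ℂ F) : Prop :=
  InvariantUnder A M ∧ InvariantUnder A Mᗮ

/-- `Φ` is a partial isometry with initial space `W`: it is isometric on `W` and vanishes
on `W^⊥`. -/
def IsPartialIsometryOn (Φ : F →L[ℂ] F) (W : Submodule ℂ F) : Prop :=
  (∀ f ∈ W, ‖Φ f‖ = ‖f‖) ∧ ∀ f ∈ Wᗮ, Φ f = 0

end OperatorNotions

section FullHardy

variable (K : Type) [NormedAddCommGroup K] [InnerProductSpace ℂ K] [CompleteSpace K]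

/-- For a subspace `N ⊆ K`, the subspace `H²_N` of `H²_K`: those elements of the Hardy space
taking values in `N` almost everywhere. -/
def hardyIn (N : Submodule ℂ K) : Submodule ℂ (H2 K) where
  carrier := {g | ∀ᵐ z ∂μT, ((g : L2 K) : 𝕋 → K) z ∈ N}
  zero_mem' := by
    have h0 : ((0 : H2 K) : L2 K) = 0 := rfl
    rw [Set.mem_setOf_eq, h0]
    filter_upwards [Lp.coeFn_zero K 2 μT] with z hz
    rw [hz]
    exact N.zero_mem
  add_mem' := by
    intro a b ha hb
    have h0 : ((a + b : H2 K) : L2 K) = (a : L2 K) + (b : L2 K) := rfl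
    rw [Set.mem_setOf_eq, h0]
    filter_upwards [ha, hb, Lp.coeFn_add (a : L2 K) (b : L2 K)] with z ha' hb' hadd
    rw [hadd]
    exact N.add_mem ha' hb'
  smul_mem' := by
    intro c a ha
    have h0 : ((c • a : H2 K) : L2 K) = c • (a : L2 K) := rfl
    rw [Set.mem_setOf_eq, h0]
    filter_upwards [ha, Lp.coeFn_smul c (a : L2 K)] with z ha' hsmul
    rw [hsmul]
    exact N.smul_mem c ha'

/-- The set of `f ∈ L²(𝕋, H²_K)` with `f(t) ∈ H²_{J(t)}` for a.e. `t`. If `J` is a measurable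
range function in `K`, this is the full-Hardy subspace with base `J`. -/
def fullHardySet (J : 𝕋 → Submodule ℂ K) : Set (L2 (H2 K)) :=
  {f | ∀ᵐ t ∂μT, (f : 𝕋 → H2 K) t ∈ hardyIn K (J t)}

/-- A subspace `W ⊆ L²(𝕋, H²_K)` is full-Hardy if it is of the form
`{f : f(t) ∈ H²_{J(t)} a.e.}` for some measurable range function `J` in `K`. -/
def IsFullHardy (W : Submodule ℂ (L2 (H2 K))) : Prop :=
  ∃ J : 𝕋 → Submodule ℂ K, IsMeasRange J ∧ (W : Set (L2 (H2 K))) = fullHardySet K J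

end FullHardy

section Dimension

open scoped Classical in
/-- The Hilbert-space dimension of a subspace, as an element of `ℕ∞` (in a separable ambient
space this is the cardinality of any orthonormal basis). -/
def dimSub {F : Type*} [NormedAddCommGroup F] [InnerProductSpace ℂ F]
    (N : Submodule ℂ F) : ℕ∞ :=
  if FiniteDimensional ℂ ↥N then (Module.finrank ℂ ↥N : ℕ∞) else ⊤

end Dimension

section ScalarCase

/-- Evaluation of an element of the scalar Hardy space (via its chosen representative). -/
def ev (g : H2 ℂ) (z : 𝕋) : ℂ := ((g : L2 ℂ) : 𝕋 → ℂ) z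

/-- Iterated evaluation of an element of `L²(𝕋, H²)`. -/
def ev2 (f : L2 (H2 ℂ)) (t z : 𝕋) : ℂ := ev ((f : 𝕋 → H2 ℂ) t) z

/-- A function `h ∈ H²` is inner if `|h(z)| = 1` for a.e. `z ∈ 𝕋`. -/
def IsInnerFn (g : H2 ℂ) : Prop := ∀ᵐ z ∂μT, ‖ev g z‖ = 1

lemma ev_zero : ∀ᵐ z ∂μT, ev (0 : H2 ℂ) z = 0 := by
  have h0 : ((0 : H2 ℂ) : L2 ℂ) = 0 := rfl
  unfold ev
  rw [h0]
  filter_upwards [Lp.coeFn_zero ℂ 2 μT] with z hz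
  rw [hz]
  rfl

lemma ev_add (u v : H2 ℂ) : ∀ᵐ z ∂μT, ev (u + v) z = ev u z + ev v z := by
  have h0 : ((u + v : H2 ℂ) : L2 ℂ) = (u : L2 ℂ) + (v : L2 ℂ) := rfl
  unfold ev
  rw [h0]
  filter_upwards [Lp.coeFn_add (u : L2 ℂ) (v : L2 ℂ)] with z hz
  rw [hz]
  rfl

lemma ev_smul (c : ℂ) (u : H2 ℂ) : ∀ᵐ z ∂μT, ev (c • u) z = c * ev u z := by
  have h0 : ((c • u : H2 ℂ) : L2 ℂ) = c • (u : L2 ℂ) := rfl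
  unfold ev
  rw [h0]
  filter_upwards [Lp.coeFn_smul c (u : L2 ℂ)] with z hz
  rw [hz]
  rfl

/-- For `w ∈ H²`, the subspace `w·H² = {w·k : k ∈ H²}` of `H²` (membership described via
a.e. pointwise multiplication of representatives). -/
def mulSet (w : H2 ℂ) : Submodule ℂ (H2 ℂ) where
  carrier := {u | ∃ k : H2 ℂ, ∀ᵐ z ∂μT, ev u z = ev w z * ev k z}
  zero_mem' := by
    refine ⟨0, ?_⟩
    filter_upwards [ev_zero] with z hz
    rw [hz, mul_zero]
  add_mem' := by
    rintro u v ⟨k₁, h₁⟩ ⟨k₂, h₂⟩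
    refine ⟨k₁ + k₂, ?_⟩
    filter_upwards [h₁, h₂, ev_add u v, ev_add k₁ k₂] with z e1 e2 e3 e4
    rw [e3, e1, e2, e4, mul_add]
  smul_mem' := by
    rintro c u ⟨k, h⟩
    refine ⟨c • k, ?_⟩
    filter_upwards [h, ev_smul c u, ev_smul c k] with z e1 e2 e3
    rw [e2, e1, e3]
    ring

/-- The set `φ·L²(𝕋, H²) = {φ g : g ∈ L²(𝕋,H²)}`, where `(φ g)(t)(z) = φ(t)(z)·g(t)(z)`. -/
def timesSet (φ : L2 (H2 ℂ)) : Set (L2 (H2 ℂ)) :=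
  {h | ∃ g : L2 (H2 ℂ), ∀ᵐ t ∂μT, ∀ᵐ z ∂μT, ev2 h t z = ev2 φ t z * ev2 g t z}

end ScalarCase

/-! The converse direction is pointwise. For the direct one, fix a dense sequence `dₙ` in `H²_K`.
Each field `t ↦ P_{J(t)} dₙ` is strongly measurable (its distance to a fixed `c` is expressed
through `⟪P_{J(t)} dₙ, dₙ⟫` and `⟪P_{J(t)} dₙ, c⟫`) and bounded, hence lies in `M`, so
`S (P_{J(t)} dₙ) ∈ J(t)` off a null set. Off the union of these countably many null sets, `S` maps
the dense subset `{P_{J(t)} dₙ}` of the closed subspace `J(t)` into `J(t)`, hence all of `J(t)`. -/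

section RangeFunctionFields

open Set Metric TopologicalSpace

theorem stronglyMeasurable_of_measurable_dist {X H : Type*} [MeasurableSpace X]
    [PseudoMetricSpace H] [SeparableSpace H] {f : X → H}
    (h : ∀ c, Measurable fun x => dist (f x) c) : StronglyMeasurable f := by
  borelize H
  have := UniformSpace.secondCountable_of_separable H
  refine Measurable.stronglyMeasurable (measurable_of_isOpen fun U hU => ?_)
  -- By Lindelöf, `U` is a countable union of balls contained in it.
  obtain ⟨T, hT, hTU⟩ := isOpen_iUnion_countable
    (fun p : {p : H × ℝ // ball p.1 p.2 ⊆ U} => ball p.1.1 p.1.2) fun _ => isOpen_ball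
  have hU : U = ⋃ p ∈ T, ball p.1.1 p.1.2 := by
    rw [hTU]
    refine Subset.antisymm (fun x hx => ?_) (iUnion_subset fun p => p.2)
    obtain ⟨ε, hε, hball⟩ := Metric.isOpen_iff.1 hU x hx
    exact mem_iUnion.2 ⟨⟨(x, ε), hball⟩, mem_ball_self hε⟩
  rw [hU, preimage_iUnion₂]
  exact .biUnion hT fun p _ => measurableSet_lt (h _) measurable_const

variable {F : Type*} [NormedAddCommGroup F] [InnerProductSpace ℂ F]

theorem dist_starProjection_sq (N : Submodule ℂ F) [N.HasOrthogonalProjection] (d c : F) :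
    dist (N.starProjection d) c ^ 2 =
      re ⟪N.starProjection d, d⟫_ℂ - 2 * re ⟪N.starProjection d, c⟫_ℂ + ‖c‖ ^ 2 := by
  rw [dist_eq_norm, norm_sub_sq (𝕜 := ℂ)]
  congr 2
  exact (N.re_inner_starProjection_eq_normSq d).symm

theorem mapsTo_of_mapsTo_starProjection_denseRange (N : Submodule ℂ F)
    [CompleteSpace N] {ι : Type*} {u : ι → F} (hu : DenseRange u) {A : F →L[ℂ] F}
    (hA : ∀ i, A (N.starProjection (u i)) ∈ N) : MapsTo A N N := by
  intro g hg
  have hdense : g ∈ closure (range fun i => N.starProjection (u i)) := by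
    rw [← N.starProjection_eq_self_iff.2 hg, range_comp']
    exact image_closure_subset_closure_image N.starProjection.continuous
      ⟨g, hu.closure_eq ▸ mem_univ g, rfl⟩
  have hmaps : MapsTo A (range fun i => N.starProjection (u i)) N := by
    rintro _ ⟨i, rfl⟩
    exact hA i
  exact hmaps.closure_left A.continuous
    (completeSpace_coe_iff_isComplete.1 ‹_›).isClosed hdense

variable [CompleteSpace F] {J : 𝕋 → Submodule ℂ F}

theorem projTo_eq_starProjection (N : Submodule ℂ F) [CompleteSpace N] (x : F) :
    projTo N x = N.starProjection x := by
  rw [projTo, dif_pos (completeSpace_coe_iff_isComplete.1 ‹_›).isClosed]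
  rfl

theorem IsMeasRange.stronglyMeasurable_projTo [SeparableSpace F] (hJ : IsMeasRange J)
    (d : F) : StronglyMeasurable fun t => projTo (J t) d := by
  refine stronglyMeasurable_of_measurable_dist fun c => ?_
  have hdist : ∀ t, dist (projTo (J t) d) c =
      √(re ⟪projTo (J t) d, d⟫_ℂ - 2 * re ⟪projTo (J t) d, c⟫_ℂ + ‖c‖ ^ 2) := by
    intro t
    have := (hJ.1 t).completeSpace_coe
    rw [projTo_eq_starProjection, ← dist_starProjection_sq, Real.sqrt_sq dist_nonneg]
  simp_rw [hdist]
  have hd := Complex.measurable_re.comp (hJ.2 d d)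
  have hc := Complex.measurable_re.comp (hJ.2 d c)
  fun_prop

theorem IsMeasRange.memLp_projTo [SeparableSpace F] (hJ : IsMeasRange J) (d : F) :
    MemLp (fun t => projTo (J t) d) 2 μT :=
  MemLp.of_bound (hJ.stronglyMeasurable_projTo d).aestronglyMeasurable ‖d‖
    (Filter.Eventually.of_forall fun t => by
      have := (hJ.1 t).completeSpace_coe
      rw [projTo_eq_starProjection]
      exact (J t).norm_starProjection_apply_le d)

theorem IsMeasRange.mapsTo_compLpL_rangeSet_iff [SeparableSpace F]
    (hJ : IsMeasRange J) (A : F →L[ℂ] F) :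
    MapsTo (A.compLpL 2 μT) (rangeSet J) (rangeSet J) ↔ ∀ᵐ t ∂μT, MapsTo A (J t) (J t) := by
  constructor
  · intro hA
    have hproj : ∀ n, ∀ᵐ t ∂μT, A (projTo (J t) (denseSeq F n)) ∈ J t := by
      intro n
      have hmem := hJ.memLp_projTo (denseSeq F n)
      have hfield : hmem.toLp ∈ rangeSet J := by
        filter_upwards [hmem.coeFn_toLp] with t ht
        have := (hJ.1 t).completeSpace_coe
        rw [ht, projTo_eq_starProjection]
        exact (J t).starProjection_apply_mem _
      filter_upwards [hA hfield, A.coeFn_compLpL hmem.toLp, hmem.coeFn_toLp] with t hAt hAf hf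
      rwa [hAf, hf] at hAt
    filter_upwards [ae_all_iff.2 hproj] with t ht
    have := (hJ.1 t).completeSpace_coe
    simp_rw [projTo_eq_starProjection] at ht
    exact mapsTo_of_mapsTo_starProjection_denseRange (J t) (denseRange_denseSeq F) ht
  · intro hA f hf
    filter_upwards [hA, hf, A.coeFn_compLpL f] with t hAt hft hAf
    rw [hAf]
    exact hAt hft

end RangeFunctionFields

section Statements

variable (K : Type) [NormedAddCommGroup K] [InnerProductSpace ℂ K] [CompleteSpace K]
  [SecondCountableTopology K]

theorem statement9 (M : Submodule ℂ (L2 (H2 K)))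
    (J : 𝕋 → Submodule ℂ (H2 K)) (hJ : IsMeasRange J)
    (hMJ : (M : Set (L2 (H2 K))) = rangeSet J) :
    InvariantUnder (E := L2 (H2 K)) (Shat K) M ↔ ∀ᵐ t ∂μT, ∀ g ∈ J t, S K g ∈ J t := by
  -- the separability instance of `L2 (H2 K)` is only found through this `Fact`
  have : Fact ((2 : ℝ≥0∞) ≠ ∞) := ⟨ENNReal.ofNat_ne_top⟩
  have h := hJ.mapsTo_compLpL_rangeSet_iff (S K)
  rw [← hMJ] at h
  exact h

end Statements

end ShiftPaper
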